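/- Assume the following two hypotheses: (i) for all u, w ∈ (0,1/2], κ(u,w) ≤ κ(1−u,w); (ii) the function (a,b) ↦ κ(H₂⁻¹(a), H₂⁻¹(b)) is jointly convex on (0,1]². Then for all m_u, m_w ∈ (0,1), e_u ∈ (0, H₂(m_u)], and e_w ∈ (0, H₂(m_w)], one has ζ(m_u, m_w, e_u, e_w) ≥ φ((1 − |H₂⁻¹(e_u) − H₂⁻¹(e_w)|)/2, (e_u + e_w)/2) + (H₂⁻¹(e_u) − H₂⁻¹(e_w))·(J(H₂⁻¹(e_w)) − J(H₂⁻¹(e_u)))/2 − φ((1 − |m_u − m_w|)/2, (e_u + e_w)/2). -/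

import Mathlib

/-- Binary entropy function. -/
noncomputable def H2 (x : ℝ) : ℝ := -x * Real.logb 2 x - (1 - x) * Real.logb 2 (1 - x)

/-- `J`, the derivative of the binary entropy function. -/
noncomputable def J (x : ℝ) : ℝ := Real.logb 2 ((1 - x) / x)

/-- The set of values `(1/2)·E[(u−w)(J(w)−J(u))]` achieved by finite probability
spaces `(X, p)` and functions `u, w : X → (0,1)` meeting the four moment
constraints. -/
def zetaSet (mu mw eu ew : ℝ) : Set ℝ :=
  {c | ∃ (X : Type) (_ : Fintype X) (p u w : X → ℝ),
    (∀ x, 0 ≤ p x) ∧ (∑ x, p x) = 1 ∧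
    (∀ x, u x ∈ Set.Ioo (0 : ℝ) 1) ∧ (∀ x, w x ∈ Set.Ioo (0 : ℝ) 1) ∧
    (∑ x, p x * u x) = mu ∧ (∑ x, p x * w x) = mw ∧
    (∑ x, p x * H2 (u x)) = eu ∧ (∑ x, p x * H2 (w x)) = ew ∧
    c = (1 / 2) * ∑ x, p x * ((u x - w x) * (J (w x) - J (u x)))}

/-- `ζ(m_u, m_w, e_u, e_w)`, the infimum over the constraint set. -/
noncomputable def zeta (mu mw eu ew : ℝ) : ℝ := sInf (zetaSet mu mw eu ew)

/-- `H₂⁻¹ : [0,1] → [0,1/2]`, the inverse of the binary entropy on `[0,1/2]`. -/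
noncomputable def H2inv : ℝ → ℝ := Function.invFunOn H2 (Set.Icc 0 (1 / 2))

/-- `η(x) = (1 − 2·H₂⁻¹(x))·J(H₂⁻¹(x))`. -/
noncomputable def eta (x : ℝ) : ℝ := (1 - 2 * H2inv x) * J (H2inv x)

/-- The parameter `r ∈ (0,1]` used in the definition of `φ`: `r = 1` when `x = 1/2`,
and otherwise `r ∈ (0,1)` is the (unique) solution of
`r/(1 − 2·H₂⁻¹(r)) = y/|1 − 2x|`. -/
noncomputable def rPhi (x y : ℝ) : ℝ :=
  if x = 1 / 2 then 1
  else Function.invFunOn (fun r => r / (1 - 2 * H2inv r)) (Set.Ioo 0 1) (y / |1 - 2 * x|)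

/-- The function `φ`. -/
noncomputable def phi (x y : ℝ) : ℝ :=
  if H2 x ≤ y then 0 else eta y - (y / rPhi x y) * eta (rPhi x y)

/-- `L(u) = 2·H₂(u)/(1 − 2u)` for `u ∈ [0,1/2)` (with `L(0) = 0`). -/
noncomputable def L (u : ℝ) : ℝ := 2 * H2 u / (1 - 2 * u)

/-- `L⁻¹ : [0,∞) → [0,1/2)`, the inverse of `L`. -/
noncomputable def Linv : ℝ → ℝ := Function.invFunOn L (Set.Ico 0 (1 / 2))

/-- The function `κ`. -/
noncomputable def kappa (u w : ℝ) : ℝ :=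
  if u = w then 0
  else (u - w) * (J w - J u) / 2 - |u - w| * J (Linv ((H2 u + H2 w) / |u - w|))

/-!
Pointwise, `(u - w) (J w - J u) / 2 = κ(u, w) + F(H₂ u + H₂ w, u - w)` with
`F(s, d) = |d| · G(s / |d|)` and `G = J ∘ L⁻¹`. The function `G` is convex (by Cauchy's mean
value theorem this reduces to the monotonicity of `J' / L'`), antitone and nonnegative, so its
perspective `F` is jointly convex. Jensen's inequality for `F`, and for `κ ∘ H₂⁻¹` by (ii) after
folding `u, w` into `(0, 1/2]` with (i), bounds every admissible value from below by
`κ(H₂⁻¹ e_u, H₂⁻¹ e_w) + F(e_u + e_w, m_u - m_w)`. Finally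
`φ((1 - δ)/2, y) = max 0 (η y - F(2y, δ))`: indeed `η y = F(2y, 1 - 2 H₂⁻¹ y)`, and the `r` in
the definition of `φ` solves `r / (1 - 2 H₂⁻¹ r) = y / δ` exactly when `H₂⁻¹ r = L⁻¹(2y / δ)`.
-/

open Real Set Filter Topology

lemma H2_eq_binEntropy_div (x : ℝ) : H2 x = binEntropy x / log 2 := by
  rw [H2, binEntropy, logb, logb, log_inv, log_inv]
  ring

lemma J_eq_log_sub_log {x : ℝ} (hx : x ∈ Ioo (0 : ℝ) 1) :
    J x = (log (1 - x) - log x) / log 2 := by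
  rw [J, logb, log_div (by linarith [hx.2]) hx.1.ne']

lemma H2_zero : H2 0 = 0 := by simp [H2]

lemma H2_one : H2 1 = 0 := by simp [H2]

lemma H2_half : H2 (1 / 2) = 1 := by
  rw [H2_eq_binEntropy_div, one_div, binEntropy_two_inv, div_self (log_pos one_lt_two).ne']

lemma H2_one_sub (x : ℝ) : H2 (1 - x) = H2 x := by
  simp only [H2_eq_binEntropy_div, binEntropy_one_sub]

lemma H2_pos {x : ℝ} (hx : x ∈ Ioo (0 : ℝ) 1) : 0 < H2 x := by
  rw [H2_eq_binEntropy_div]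
  exact div_pos (binEntropy_pos hx.1 hx.2) (log_pos one_lt_two)

lemma H2_nonneg {x : ℝ} (hx : x ∈ Icc (0 : ℝ) 1) : 0 ≤ H2 x := by
  rw [H2_eq_binEntropy_div]
  exact div_nonneg (binEntropy_nonneg hx.1 hx.2) (log_nonneg one_le_two)

lemma H2_le_one (x : ℝ) : H2 x ≤ 1 := by
  rw [H2_eq_binEntropy_div, div_le_one (log_pos one_lt_two)]
  exact binEntropy_le_log_two

@[fun_prop]
lemma continuous_H2 : Continuous H2 := by
  simp only [funext H2_eq_binEntropy_div]
  fun_prop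

lemma strictMonoOn_H2 : StrictMonoOn H2 (Icc 0 (1 / 2)) := by
  intro a ha b hb hab
  simp only [H2_eq_binEntropy_div]
  rw [one_div] at ha hb
  exact div_lt_div_of_pos_right (binEntropy_strictMonoOn ha hb hab) (log_pos one_lt_two)

lemma concaveOn_H2 : ConcaveOn ℝ (Icc 0 1) H2 := by
  simp only [funext H2_eq_binEntropy_div, div_eq_inv_mul]
  exact strictConcave_binEntropy.concaveOn.smul (by positivity)

lemma hasDerivAt_H2 {x : ℝ} (hx : x ∈ Ioo (0 : ℝ) 1) : HasDerivAt H2 (J x) x := by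
  simp only [funext H2_eq_binEntropy_div, J_eq_log_sub_log hx]
  exact (hasDerivAt_binEntropy hx.1.ne' hx.2.ne).div_const _

lemma J_one_sub (x : ℝ) : J (1 - x) = -J x := by
  rw [J, J, ← logb_inv, inv_div, sub_sub_cancel]

lemma J_nonneg {x : ℝ} (hx : x ∈ Icc (0 : ℝ) (1 / 2)) : 0 ≤ J x := by
  obtain rfl | hx0 := hx.1.eq_or_lt
  · simp [J]
  exact logb_nonneg one_lt_two (by rw [le_div_iff₀ hx0]; linarith [hx.2])

lemma strictAntiOn_J : StrictAntiOn J (Ioo 0 1) := by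
  intro a ha b hb hab
  refine logb_lt_logb one_lt_two (div_pos (by linarith [hb.2]) hb.1) ?_
  rw [div_lt_div_iff₀ hb.1 ha.1]
  nlinarith [ha.1, hb.2]

lemma hasDerivAt_J {x : ℝ} (hx : x ∈ Ioo (0 : ℝ) 1) :
    HasDerivAt J (-1 / (x * (1 - x) * log 2)) x := by
  have hx1 : 1 - x ≠ 0 := by linarith [hx.2]
  have hlog : HasDerivAt (fun y => (log (1 - y) - log y) / log 2)
      ((-1 / (1 - x) - 1 / x) / log 2) x := by
    have h1 := ((hasDerivAt_id x).const_sub 1).log hx1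
    have h2 := (hasDerivAt_id x).log hx.1.ne'
    simp only [id] at h1 h2
    exact (h1.sub h2).div_const _
  refine (hlog.congr_of_eventuallyEq ?_).congr_deriv ?_
  · filter_upwards [Ioo_mem_nhds hx.1 hx.2] with y hy using J_eq_log_sub_log hy
  · field_simp [(log_pos one_lt_two).ne', hx.1.ne']
    ring

lemma H2inv_mem_and_H2_H2inv {e : ℝ} (he : e ∈ Icc (0 : ℝ) 1) :
    H2inv e ∈ Icc (0 : ℝ) (1 / 2) ∧ H2 (H2inv e) = e := by
  have hsurj := intermediate_value_Icc (by norm_num : (0 : ℝ) ≤ 1 / 2) continuous_H2.continuousOn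
  rw [H2_zero, H2_half] at hsurj
  obtain ⟨x, hx, rfl⟩ := hsurj he
  exact ⟨Function.invFunOn_mem ⟨x, hx, rfl⟩, Function.invFunOn_eq ⟨x, hx, rfl⟩⟩

lemma H2inv_H2 {x : ℝ} (hx : x ∈ Icc (0 : ℝ) (1 / 2)) : H2inv (H2 x) = x :=
  strictMonoOn_H2.injOn.leftInvOn_invFunOn hx

lemma H2inv_H2_eq_min {v : ℝ} (hv : v ∈ Icc (0 : ℝ) 1) : H2inv (H2 v) = min v (1 - v) := by
  rcases le_total v (1 / 2) with h | h
  · rw [min_eq_left (by linarith), H2inv_H2 ⟨hv.1, h⟩]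
  · rw [min_eq_right (by linarith), ← H2_one_sub v, H2inv_H2 ⟨by linarith [hv.2], by linarith⟩]

lemma H2inv_one : H2inv 1 = 1 / 2 := by
  have h := H2inv_H2 (x := 1 / 2) ⟨by norm_num, le_rfl⟩
  rwa [H2_half] at h

lemma L_zero : L 0 = 0 := by simp [L, H2_zero]

lemma continuousOn_L : ContinuousOn L (Ico 0 (1 / 2)) :=
  (continuous_const.mul continuous_H2).continuousOn.div (by fun_prop)
    fun x hx => by linarith [hx.2]

noncomputable def derivLNumerator (h : ℝ) : ℝ := 2 * J h * (1 - 2 * h) + 4 * H2 h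

lemma two_mul_sq_div_log_two_le_derivLNumerator {h : ℝ} (hh : h ∈ Ioo (0 : ℝ) (1 / 2)) :
    2 * (1 - 2 * h) ^ 2 / log 2 ≤ derivLNumerator h := by
  have hlog2 := log_pos one_lt_two
  have h1 : 0 < 1 - h := by linarith [hh.2]
  have hJ : 1 - 2 * h ≤ J h * log 2 := by
    rw [J, logb, div_mul_cancel₀ _ hlog2.ne']
    calc 1 - 2 * h ≤ 1 - ((1 - h) / h)⁻¹ := by
          rw [inv_div, sub_le_sub_iff_left, div_le_iff₀ h1]
          nlinarith [mul_pos hh.1 (sub_pos.2 hh.2)]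
      _ ≤ log ((1 - h) / h) := one_sub_inv_le_log_of_pos (div_pos h1 hh.1)
  have hH := H2_pos ⟨hh.1, by linarith [hh.2]⟩
  rw [derivLNumerator, div_le_iff₀ hlog2]
  nlinarith [hh.2]

lemma derivLNumerator_pos {h : ℝ} (hh : h ∈ Ioo (0 : ℝ) (1 / 2)) : 0 < derivLNumerator h := by
  refine lt_of_lt_of_le ?_ (two_mul_sq_div_log_two_le_derivLNumerator hh)
  have : 0 < 1 - 2 * h := by linarith [hh.2]
  have := log_pos one_lt_two
  positivity

lemma hasDerivAt_L {h : ℝ} (hh : h ∈ Ioo (0 : ℝ) (1 / 2)) :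
    HasDerivAt L (derivLNumerator h / (1 - 2 * h) ^ 2) h := by
  have hne : 1 - 2 * h ≠ 0 := by linarith [hh.2]
  have hnum := (hasDerivAt_H2 ⟨hh.1, by linarith [hh.2]⟩).const_mul 2
  have hden := ((hasDerivAt_id h).const_mul 2).const_sub 1
  refine (hnum.div hden hne).congr_deriv ?_
  simp only [derivLNumerator, id, mul_one]
  ring

lemma strictMonoOn_L : StrictMonoOn L (Ico 0 (1 / 2)) := by
  refine strictMonoOn_of_deriv_pos (convex_Ico 0 (1 / 2)) continuousOn_L fun x hx => ?_
  rw [interior_Ico] at hx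
  rw [(hasDerivAt_L hx).deriv]
  have : 0 < 1 - 2 * x := by linarith [hx.2]
  exact div_pos (derivLNumerator_pos hx) (by positivity)

lemma tendsto_L_nhdsLT_half : Tendsto L (𝓝[<] (1 / 2)) atTop := by
  have hnum : Tendsto (fun u => 2 * H2 u) (𝓝[<] (1 / 2)) (𝓝 2) := by
    have := (continuous_H2.tendsto (1 / 2)).const_mul 2
    rw [H2_half, mul_one] at this
    exact this.mono_left nhdsWithin_le_nhds
  have hden : Tendsto (fun u : ℝ => 1 - 2 * u) (𝓝[<] (1 / 2)) (𝓝[>] 0) := by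
    refine tendsto_nhdsWithin_iff.2 ⟨?_, ?_⟩
    · have : Tendsto (fun u : ℝ => 1 - 2 * u) (𝓝 (1 / 2)) (𝓝 (1 - 2 * (1 / 2))) :=
        (continuous_const.sub (continuous_const.mul continuous_id)).tendsto _
      rw [show (1 : ℝ) - 2 * (1 / 2) = 0 by norm_num] at this
      exact this.mono_left nhdsWithin_le_nhds
    · filter_upwards [self_mem_nhdsWithin] with u (hu : u < 1 / 2)
      show 0 < 1 - 2 * u
      linarith
  have := hnum.pos_mul_atTop two_pos (tendsto_inv_nhdsGT_zero.comp hden)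
  exact this.congr fun u => (div_eq_mul_inv _ _).symm

lemma exists_mem_Ico_L_eq {t : ℝ} (ht : 0 ≤ t) : ∃ h ∈ Ico (0 : ℝ) (1 / 2), L h = t := by
  obtain ⟨b, htb, hb⟩ := ((tendsto_L_nhdsLT_half.eventually_ge_atTop t).and
    (Ioo_mem_nhdsLT (by norm_num : (0 : ℝ) < 1 / 2))).exists
  have hsub : Icc 0 b ⊆ Ico (0 : ℝ) (1 / 2) := fun x hx => ⟨hx.1, hx.2.trans_lt hb.2⟩
  obtain ⟨h, hh, rfl⟩ := intermediate_value_Icc hb.1.le (continuousOn_L.mono hsub)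
    ⟨by rwa [L_zero], htb⟩
  exact ⟨h, hsub hh, rfl⟩

lemma Linv_mem_and_L_Linv {t : ℝ} (ht : 0 ≤ t) : Linv t ∈ Ico (0 : ℝ) (1 / 2) ∧ L (Linv t) = t := by
  obtain ⟨h, hh, rfl⟩ := exists_mem_Ico_L_eq ht
  exact ⟨Function.invFunOn_mem ⟨h, hh, rfl⟩, Function.invFunOn_eq ⟨h, hh, rfl⟩⟩

lemma Linv_L {h : ℝ} (hh : h ∈ Ico (0 : ℝ) (1 / 2)) : Linv (L h) = h :=
  strictMonoOn_L.injOn.leftInvOn_invFunOn hh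

lemma Linv_lt_Linv {t t' : ℝ} (ht : 0 ≤ t) (htt' : t < t') : Linv t < Linv t' := by
  obtain ⟨hm, hL⟩ := Linv_mem_and_L_Linv ht
  obtain ⟨hm', hL'⟩ := Linv_mem_and_L_Linv (ht.trans htt'.le)
  rwa [← strictMonoOn_L.lt_iff_lt hm hm', hL, hL']

lemma Linv_pos {t : ℝ} (ht : 0 < t) : 0 < Linv t := by
  have h0 : Linv 0 = 0 := by simpa [L_zero] using Linv_L (h := 0) ⟨le_rfl, by norm_num⟩
  simpa [h0] using Linv_lt_Linv le_rfl ht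

lemma hasDerivAt_derivLNumerator {h : ℝ} (hh : h ∈ Ioo (0 : ℝ) 1) :
    HasDerivAt derivLNumerator (-2 * (1 - 2 * h) / (h * (1 - h) * log 2)) h := by
  have hlin := ((hasDerivAt_id h).const_mul 2).const_sub 1
  refine ((((hasDerivAt_J hh).const_mul 2).mul hlin).add
    ((hasDerivAt_H2 hh).const_mul 4)).congr_deriv ?_
  simp only [id, mul_one]
  ring

lemma antitoneOn_sq_div_derivLNumerator :
    AntitoneOn (fun h => (1 - 2 * h) ^ 2 / (h * (1 - h) * derivLNumerator h)) (Ioo 0 (1 / 2)) := by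
  have hderiv : ∀ h ∈ Ioo (0 : ℝ) (1 / 2),
      HasDerivAt (fun h => (1 - 2 * h) ^ 2 / (h * (1 - h) * derivLNumerator h))
        (-((1 - 2 * h) * (derivLNumerator h - 2 * (1 - 2 * h) ^ 2 / log 2)) /
          (h * (1 - h) * derivLNumerator h) ^ 2) h := by
    intro h hh
    have hlog2 := log_pos one_lt_two
    have hN := derivLNumerator_pos hh
    have h0 : 0 < h := hh.1
    have h1 : 0 < 1 - h := by linarith [hh.2]
    have hnum : HasDerivAt (fun h : ℝ => (1 - 2 * h) ^ 2) (2 * (1 - 2 * h) * -2) h := by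
      simpa using (((hasDerivAt_id h).const_mul 2).const_sub 1).fun_pow 2
    have hden : HasDerivAt (fun h => h * (1 - h) * derivLNumerator h)
        ((1 - 2 * h) * derivLNumerator h + h * (1 - h) * (-2 * (1 - 2 * h) / (h * (1 - h) * log 2)))
        h := by
      refine (((hasDerivAt_id h).fun_mul ((hasDerivAt_id h).const_sub 1)).fun_mul
        (hasDerivAt_derivLNumerator ⟨hh.1, by linarith [hh.2]⟩)).congr_deriv ?_
      simp only [id]
      ring
    refine (hnum.fun_div hden (by positivity)).congr_deriv ?_
    field_simp
    ring
  refine antitoneOn_of_deriv_nonpos (convex_Ioo 0 (1 / 2))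
    (fun h hh => (hderiv h hh).continuousAt.continuousWithinAt)
    (fun h hh => (hderiv h (interior_subset hh)).differentiableAt.differentiableWithinAt)
    fun h hh => ?_
  rw [interior_Ioo] at hh
  rw [(hderiv h hh).deriv]
  have := two_mul_sq_div_log_two_le_derivLNumerator hh
  have : 0 ≤ 1 - 2 * h := by linarith [hh.2]
  exact div_nonpos_of_nonpos_of_nonneg (neg_nonpos.2 (by apply mul_nonneg <;> linarith))
    (sq_nonneg _)

lemma monotoneOn_derivJ_div_derivL :
    MonotoneOn (fun h => -1 / (h * (1 - h) * log 2) / (derivLNumerator h / (1 - 2 * h) ^ 2))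
      (Ioo 0 (1 / 2)) := by
  have hlog2 := log_pos one_lt_two
  refine MonotoneOn.congr (f₁ := fun h => -((1 - 2 * h) ^ 2 / (h * (1 - h) * derivLNumerator h)) /
    log 2) (fun x hx y hy hxy => ?_) fun h hh => ?_
  · exact div_le_div_of_nonneg_right (neg_le_neg (antitoneOn_sq_div_derivLNumerator hx hy hxy))
      hlog2.le
  · have hN := derivLNumerator_pos hh
    have h1 : 1 - h ≠ 0 := by linarith [hh.2]
    have h2 : 1 - 2 * h ≠ 0 := by linarith [hh.2]
    field_simp [hh.1.ne', hN.ne']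

lemma exists_mem_Ioo_div_sub_eq_div {f g f' g' : ℝ → ℝ} {a b : ℝ} (hab : a < b)
    (hf : ∀ x ∈ Icc a b, HasDerivAt f (f' x) x) (hg : ∀ x ∈ Icc a b, HasDerivAt g (g' x) x)
    (hg' : ∀ x ∈ Icc a b, 0 < g' x) :
    ∃ ξ ∈ Ioo a b, (f b - f a) / (g b - g a) = f' ξ / g' ξ := by
  have hfc : ContinuousOn f (Icc a b) := fun x hx => (hf x hx).continuousAt.continuousWithinAt
  have hgc : ContinuousOn g (Icc a b) := fun x hx => (hg x hx).continuousAt.continuousWithinAt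
  obtain ⟨η, hη, hgη⟩ := exists_hasDerivAt_eq_slope g g' hab hgc
    fun x hx => hg x (Ioo_subset_Icc_self hx)
  have hgab : 0 < g b - g a := by
    have := hg' η (Ioo_subset_Icc_self hη)
    rwa [hgη, div_pos_iff_of_pos_right (sub_pos.2 hab)] at this
  obtain ⟨ξ, hξ, hcauchy⟩ := exists_ratio_hasDerivAt_eq_ratio_slope f f' hab hfc
    (fun x hx => hf x (Ioo_subset_Icc_self hx)) g g' hgc fun x hx => hg x (Ioo_subset_Icc_self hx)
  refine ⟨ξ, hξ, ?_⟩
  rw [div_eq_div_iff hgab.ne' (hg' ξ (Ioo_subset_Icc_self hξ)).ne']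
  linarith

lemma div_sub_le_div_sub_of_monotoneOn {f g f' g' : ℝ → ℝ} {a b c : ℝ} (hab : a < b) (hbc : b < c)
    (hf : ∀ x ∈ Icc a c, HasDerivAt f (f' x) x) (hg : ∀ x ∈ Icc a c, HasDerivAt g (g' x) x)
    (hg' : ∀ x ∈ Icc a c, 0 < g' x) (hmono : MonotoneOn (fun x => f' x / g' x) (Icc a c)) :
    (f b - f a) / (g b - g a) ≤ (f c - f b) / (g c - g b) := by
  have hab' : Icc a b ⊆ Icc a c := Icc_subset_Icc_right hbc.le
  have hbc' : Icc b c ⊆ Icc a c := Icc_subset_Icc_left hab.le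
  obtain ⟨ξ, hξ, hξeq⟩ := exists_mem_Ioo_div_sub_eq_div hab (fun x hx => hf x (hab' hx))
    (fun x hx => hg x (hab' hx)) fun x hx => hg' x (hab' hx)
  obtain ⟨ζ, hζ, hζeq⟩ := exists_mem_Ioo_div_sub_eq_div hbc (fun x hx => hf x (hbc' hx))
    (fun x hx => hg x (hbc' hx)) fun x hx => hg' x (hbc' hx)
  rw [hξeq, hζeq]
  exact hmono (hab' (Ioo_subset_Icc_self hξ)) (hbc' (Ioo_subset_Icc_self hζ)) (hξ.2.trans hζ.1).le

noncomputable def G (t : ℝ) : ℝ := J (Linv t)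

lemma G_nonneg {t : ℝ} (ht : 0 ≤ t) : 0 ≤ G t :=
  J_nonneg (Ico_subset_Icc_self (Linv_mem_and_L_Linv ht).1)

lemma antitoneOn_G : AntitoneOn G (Ioi 0) := by
  intro t ht t' ht' htt'
  obtain rfl | hlt := htt'.eq_or_lt
  · rfl
  have hmem := (Linv_mem_and_L_Linv (le_of_lt ht)).1
  have hmem' := (Linv_mem_and_L_Linv (le_of_lt ht')).1
  exact (strictAntiOn_J ⟨Linv_pos ht, by linarith [hmem.2]⟩ ⟨Linv_pos ht', by linarith [hmem'.2]⟩
    (Linv_lt_Linv (le_of_lt ht) hlt)).le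

lemma convexOn_G : ConvexOn ℝ (Ioi 0) G := by
  refine convexOn_iff_slope_mono_adjacent.2 ⟨convex_Ioi 0, fun t₁ t₂ t₃ ht₁ ht₃ h₁₂ h₂₃ => ?_⟩
  have hsub : Icc (Linv t₁) (Linv t₃) ⊆ Ioo 0 (1 / 2) := fun x hx =>
    ⟨(Linv_pos ht₁).trans_le hx.1, hx.2.trans_lt (Linv_mem_and_L_Linv (le_of_lt ht₃)).1.2⟩
  have ht₁' : (0 : ℝ) ≤ t₁ := le_of_lt ht₁
  have ht₂' := ht₁'.trans h₁₂.le
  have hslope := div_sub_le_div_sub_of_monotoneOn (Linv_lt_Linv ht₁' h₁₂) (Linv_lt_Linv ht₂' h₂₃)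
    (fun x hx => hasDerivAt_J ⟨(hsub hx).1, by linarith [(hsub hx).2]⟩)
    (fun x hx => hasDerivAt_L (hsub hx)) (fun x hx => ?_) (monotoneOn_derivJ_div_derivL.mono hsub)
  · simpa only [G, (Linv_mem_and_L_Linv ht₁').2, (Linv_mem_and_L_Linv ht₂').2,
      (Linv_mem_and_L_Linv (le_of_lt ht₃)).2] using hslope
  · have : 0 < 1 - 2 * x := by linarith [(hsub hx).2]
    exact div_pos (derivLNumerator_pos (hsub hx)) (by positivity)

section Perspective

variable {g : ℝ → ℝ}

lemma mul_comp_div_le_mul_comp_div (hg : AntitoneOn g (Ioi 0)) {y y' e : ℝ} (hy : 0 < y)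
    (hyy' : y ≤ y') (he : 0 < e) : e * g (y' / e) ≤ e * g (y / e) :=
  mul_le_mul_of_nonneg_left (hg (div_pos hy he) (div_pos (hy.trans_le hyy') he)
    (div_le_div_of_nonneg_right hyy' he.le)) he.le

lemma monotoneOn_mul_comp_div (hg : AntitoneOn g (Ioi 0)) (hg₀ : ∀ t ∈ Ioi 0, 0 ≤ g t) {y : ℝ}
    (hy : 0 < y) : MonotoneOn (fun e => e * g (y / e)) (Ici 0) := by
  intro e he e' he' hee'
  obtain rfl | he := (show (0 : ℝ) ≤ e from he).eq_or_lt
  · obtain rfl | he' := (show (0 : ℝ) ≤ e' from he').eq_or_lt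
    · rfl
    · simpa using mul_nonneg he'.le (hg₀ _ (div_pos hy he'))
  calc e * g (y / e) ≤ e * g (y / e') :=
        mul_le_mul_of_nonneg_left (hg (div_pos hy (he.trans_le hee')) (div_pos hy he)
          (div_le_div_of_nonneg_left hy.le he hee')) he.le
    _ ≤ e' * g (y / e') := mul_le_mul_of_nonneg_right hee' (hg₀ _ (div_pos hy (he.trans_le hee')))

-- Lean's `y / 0 = 0` makes the function vanish on the face `e = 0`.
lemma convexOn_perspective (hconv : ConvexOn ℝ (Ioi 0) g) (hanti : AntitoneOn g (Ioi 0)) :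
    ConvexOn ℝ (Ioi 0 ×ˢ Ici 0) fun q : ℝ × ℝ => q.2 * g (q.1 / q.2) := by
  refine convexOn_iff_forall_pos.2 ⟨(convex_Ioi 0).prod (convex_Ici 0), ?_⟩
  rintro ⟨y₁, e₁⟩ ⟨hy₁ : 0 < y₁, he₁ : 0 ≤ e₁⟩ ⟨y₂, e₂⟩ ⟨hy₂ : 0 < y₂, he₂ : 0 ≤ e₂⟩ a b ha hb hab
  simp only [Prod.smul_mk, Prod.mk_add_mk, smul_eq_mul]
  rcases he₁.eq_or_lt with rfl | he₁ <;> rcases he₂.eq_or_lt with rfl | he₂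
  · simp
  · calc (a * 0 + b * e₂) * g ((a * y₁ + b * y₂) / (a * 0 + b * e₂))
        _ = b * e₂ * g ((a * y₁ + b * y₂) / (b * e₂)) := by rw [mul_zero, zero_add]
        _ ≤ b * e₂ * g (b * y₂ / (b * e₂)) :=
          mul_comp_div_le_mul_comp_div hanti (by positivity) (by nlinarith) (by positivity)
        _ = a * (0 * g (y₁ / 0)) + b * (e₂ * g (y₂ / e₂)) := by
          rw [mul_div_mul_left _ _ hb.ne']
          ring
  · calc (a * e₁ + b * 0) * g ((a * y₁ + b * y₂) / (a * e₁ + b * 0))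
        _ = a * e₁ * g ((a * y₁ + b * y₂) / (a * e₁)) := by rw [mul_zero, add_zero]
        _ ≤ a * e₁ * g (a * y₁ / (a * e₁)) :=
          mul_comp_div_le_mul_comp_div hanti (by positivity) (by nlinarith) (by positivity)
        _ = a * (e₁ * g (y₁ / e₁)) + b * (0 * g (y₂ / 0)) := by
          rw [mul_div_mul_left _ _ ha.ne']
          ring
  · have hE : 0 < a * e₁ + b * e₂ := by positivity
    have hjensen := hconv.2 (show y₁ / e₁ ∈ Ioi 0 from div_pos hy₁ he₁)
      (show y₂ / e₂ ∈ Ioi 0 from div_pos hy₂ he₂) (by positivity : 0 ≤ a * e₁ / (a * e₁ + b * e₂))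
      (by positivity : 0 ≤ b * e₂ / (a * e₁ + b * e₂)) (by field_simp)
    have hmid : (a * e₁ / (a * e₁ + b * e₂)) • (y₁ / e₁) + (b * e₂ / (a * e₁ + b * e₂)) • (y₂ / e₂)
        = (a * y₁ + b * y₂) / (a * e₁ + b * e₂) := by
      simp only [smul_eq_mul]
      field_simp
    rw [hmid, smul_eq_mul, smul_eq_mul] at hjensen
    calc (a * e₁ + b * e₂) * g ((a * y₁ + b * y₂) / (a * e₁ + b * e₂))
        _ ≤ (a * e₁ + b * e₂) * (a * e₁ / (a * e₁ + b * e₂) * g (y₁ / e₁) +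
            b * e₂ / (a * e₁ + b * e₂) * g (y₂ / e₂)) := mul_le_mul_of_nonneg_left hjensen hE.le
        _ = a * (e₁ * g (y₁ / e₁)) + b * (e₂ * g (y₂ / e₂)) := by
          field_simp

lemma convexOn_abs_perspective (hconv : ConvexOn ℝ (Ioi 0) g) (hanti : AntitoneOn g (Ioi 0))
    (hg₀ : ∀ t ∈ Ioi 0, 0 ≤ g t) :
    ConvexOn ℝ (Ioi 0 ×ˢ univ) fun q : ℝ × ℝ => |q.2| * g (q.1 / |q.2|) := by
  refine convexOn_iff_forall_pos.2 ⟨(convex_Ioi 0).prod convex_univ, ?_⟩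
  rintro ⟨s₁, d₁⟩ ⟨hs₁ : 0 < s₁, -⟩ ⟨s₂, d₂⟩ ⟨hs₂ : 0 < s₂, -⟩ a b ha hb hab
  have hP := (convexOn_perspective hconv hanti).2
    (show (s₁, |d₁|) ∈ Ioi 0 ×ˢ Ici 0 from ⟨hs₁, abs_nonneg d₁⟩)
    (show (s₂, |d₂|) ∈ Ioi 0 ×ˢ Ici 0 from ⟨hs₂, abs_nonneg d₂⟩) ha.le hb.le hab
  simp only [Prod.smul_mk, Prod.mk_add_mk, smul_eq_mul] at hP ⊢
  have habs : |a * d₁ + b * d₂| ≤ a * |d₁| + b * |d₂| := (abs_add_le _ _).trans_eq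
    (by rw [abs_mul, abs_mul, abs_of_pos ha, abs_of_pos hb])
  exact (monotoneOn_mul_comp_div hanti hg₀ (by positivity) (abs_nonneg (a * d₁ + b * d₂))
    (show 0 ≤ a * |d₁| + b * |d₂| by positivity) habs).trans hP

end Perspective

noncomputable def F (s d : ℝ) : ℝ := |d| * G (s / |d|)

lemma convexOn_F : ConvexOn ℝ (Ioi 0 ×ˢ univ) fun q : ℝ × ℝ => F q.1 q.2 :=
  convexOn_abs_perspective convexOn_G antitoneOn_G fun _ ht => G_nonneg (le_of_lt ht)

lemma F_zero (s : ℝ) : F s 0 = 0 := by simp [F]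

lemma F_abs (s d : ℝ) : F s |d| = F s d := by rw [F, F, abs_abs]

lemma F_le_F {s d d' : ℝ} (hs : 0 < s) (hdd' : |d| ≤ |d'|) : F s d ≤ F s d' :=
  monotoneOn_mul_comp_div antitoneOn_G (fun _ ht => G_nonneg (le_of_lt ht)) hs (abs_nonneg d)
    (abs_nonneg d') hdd'

lemma kappa_eq_sub_F (u w : ℝ) :
    kappa u w = (u - w) * (J w - J u) / 2 - F (H2 u + H2 w) (u - w) := by
  rcases eq_or_ne u w with rfl | h
  · simp [kappa, F]
  · rw [kappa, if_neg h, F, G]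

lemma kappa_comm (u w : ℝ) : kappa u w = kappa w u := by
  rw [kappa_eq_sub_F, kappa_eq_sub_F, F, F, abs_sub_comm, add_comm (H2 w)]
  ring

lemma kappa_one_sub_one_sub (u w : ℝ) : kappa (1 - u) (1 - w) = kappa u w := by
  rw [kappa_eq_sub_F, kappa_eq_sub_F, H2_one_sub, H2_one_sub, J_one_sub, J_one_sub, F, F,
    show 1 - u - (1 - w) = -(u - w) by ring, abs_neg]
  ring

lemma kappa_H2inv_H2_le
    (hyp : ∀ u w : ℝ, u ∈ Ioc (0 : ℝ) (1 / 2) → w ∈ Ioc (0 : ℝ) (1 / 2) →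
      kappa u w ≤ kappa (1 - u) w)
    {u w : ℝ} (hu : u ∈ Ioo (0 : ℝ) 1) (hw : w ∈ Ioo (0 : ℝ) 1) :
    kappa (H2inv (H2 u)) (H2inv (H2 w)) ≤ kappa u w := by
  rw [H2inv_H2_eq_min (Ioo_subset_Icc_self hu), H2inv_H2_eq_min (Ioo_subset_Icc_self hw)]
  rcases le_total u (1 / 2) with hu2 | hu2 <;> rcases le_total w (1 / 2) with hw2 | hw2
  · rw [min_eq_left (by linarith), min_eq_left (by linarith)]
  · rw [min_eq_left (by linarith), min_eq_right (by linarith), kappa_comm, kappa_comm u]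
    simpa using hyp (1 - w) u ⟨by linarith [hw.2], by linarith⟩ ⟨hu.1, hu2⟩
  · rw [min_eq_right (by linarith), min_eq_left (by linarith)]
    simpa using hyp (1 - u) w ⟨by linarith [hu.2], by linarith⟩ ⟨hw.1, hw2⟩
  · rw [min_eq_right (by linarith), min_eq_right (by linarith), kappa_one_sub_one_sub]

lemma eta_one : eta 1 = 0 := by simp [eta, H2inv_one]

lemma eta_eq_F {y : ℝ} (hy : y ∈ Ioc (0 : ℝ) 1) : eta y = F (2 * y) (1 - 2 * H2inv y) := by
  obtain ⟨hm, hH2⟩ := H2inv_mem_and_H2_H2inv (Ioc_subset_Icc_self hy)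
  rcases hm.2.eq_or_lt with h | h
  · simp [eta, h, F_zero]
  · have hpos : 0 < 1 - 2 * H2inv y := by linarith
    have hL : L (H2inv y) = 2 * y / (1 - 2 * H2inv y) := by rw [L, hH2]
    rw [eta, F, G, abs_of_pos hpos, ← hL, Linv_L ⟨hm.1, h⟩]

lemma div_mul_eta_eq_F {r y δ : ℝ} (hr : r ∈ Ioo (0 : ℝ) 1) (hy : 0 < y) (hδ : 0 < δ)
    (hrδ : r / (1 - 2 * H2inv r) = y / δ) : y / r * eta r = F (2 * y) δ := by
  obtain ⟨hm, hH2⟩ := H2inv_mem_and_H2_H2inv (Ioo_subset_Icc_self hr)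
  have hpos : 0 < 1 - 2 * H2inv r := by
    by_contra! hle
    have := div_nonpos_of_nonneg_of_nonpos hr.1.le hle
    rw [hrδ] at this
    exact (div_pos hy hδ).not_ge this
  rw [div_eq_div_iff hpos.ne' hδ.ne'] at hrδ
  have hL : L (H2inv r) = 2 * y / δ := by
    rw [L, hH2, div_eq_div_iff hpos.ne' hδ.ne']
    linarith
  have hyr : y / r = δ / (1 - 2 * H2inv r) := by
    rw [div_eq_div_iff hr.1.ne' hpos.ne']
    linarith
  rw [F, abs_of_pos hδ, G, ← hL, Linv_L ⟨hm.1, by linarith⟩, eta, hyr]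
  field_simp

lemma exists_div_one_sub_two_mul_H2inv_eq {c : ℝ} (hc : 0 < c) :
    ∃ r ∈ Ioo (0 : ℝ) 1, r / (1 - 2 * H2inv r) = c := by
  obtain ⟨hm, hL⟩ := Linv_mem_and_L_Linv (by positivity : (0 : ℝ) ≤ 2 * c)
  have hpos := Linv_pos (by positivity : (0 : ℝ) < 2 * c)
  have hH2lt : H2 (Linv (2 * c)) < 1 := by
    have := strictMonoOn_H2 ⟨hpos.le, hm.2.le⟩ ⟨by norm_num, le_rfl⟩ hm.2
    rwa [H2_half] at this
  refine ⟨H2 (Linv (2 * c)), ⟨H2_pos ⟨hpos, by linarith [hm.2]⟩, hH2lt⟩, ?_⟩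
  rw [H2inv_H2 ⟨hpos.le, hm.2.le⟩]
  rw [L, mul_div_assoc] at hL
  linarith

lemma div_rPhi_mul_eta_rPhi {δ y : ℝ} (hδ : δ ∈ Ico (0 : ℝ) 1) (hy : 0 < y) :
    y / rPhi ((1 - δ) / 2) y * eta (rPhi ((1 - δ) / 2) y) = F (2 * y) δ := by
  rcases hδ.1.eq_or_lt with rfl | hδ0
  · simp [rPhi, eta_one, F_zero]
  have hex := exists_div_one_sub_two_mul_H2inv_eq (div_pos hy hδ0)
  rw [rPhi, if_neg (by linarith), show 1 - 2 * ((1 - δ) / 2) = δ by ring, abs_of_pos hδ0]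
  exact div_mul_eta_eq_F (Function.invFunOn_mem hex) hy hδ0 (Function.invFunOn_eq hex)

lemma phi_eq_max {δ y : ℝ} (hδ : δ ∈ Ico (0 : ℝ) 1) (hy : y ∈ Ioc (0 : ℝ) 1) :
    phi ((1 - δ) / 2) y = max 0 (eta y - F (2 * y) δ) := by
  obtain ⟨hm, hH2⟩ := H2inv_mem_and_H2_H2inv (Ioc_subset_Icc_self hy)
  have hx : (1 - δ) / 2 ∈ Icc (0 : ℝ) (1 / 2) := ⟨by linarith [hδ.2], by linarith [hδ.1]⟩
  have hδ' : 0 ≤ 1 - 2 * H2inv y := by linarith [hm.2]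
  rw [phi]
  split_ifs with hcase
  · have hle : 1 - 2 * H2inv y ≤ δ := by
      have := (strictMonoOn_H2.le_iff_le hx hm).1 (hH2.symm ▸ hcase)
      linarith
    have := F_le_F (s := 2 * y) (d := 1 - 2 * H2inv y) (d' := δ) (by linarith [hy.1])
      (by rwa [abs_of_nonneg hδ', abs_of_nonneg hδ.1])
    rw [max_eq_left (show eta y - F (2 * y) δ ≤ 0 by linarith [eta_eq_F hy])]
  · have hlt : δ < 1 - 2 * H2inv y := by
      have := (strictMonoOn_H2.lt_iff_lt hm hx).1 (hH2.symm ▸ not_le.1 hcase)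
      linarith
    have := F_le_F (s := 2 * y) (d := δ) (d' := 1 - 2 * H2inv y) (by linarith [hy.1])
      (by rw [abs_of_nonneg hδ', abs_of_nonneg hδ.1]; exact hlt.le)
    rw [max_eq_right (show 0 ≤ eta y - F (2 * y) δ by linarith [eta_eq_F hy]),
      div_rPhi_mul_eta_rPhi hδ hy.1]

lemma exists_fin_two_law {m e : ℝ} (hm : m ∈ Ioo (0 : ℝ) 1) (he : e ∈ Ioc 0 (H2 m)) :
    ∃ p v : Fin 2 → ℝ, (∀ i, 0 ≤ p i) ∧ ∑ i, p i = 1 ∧ (∀ i, v i ∈ Ioo (0 : ℝ) 1) ∧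
      ∑ i, p i * v i = m ∧ ∑ i, p i * H2 (v i) = e := by
  -- weights `1 - m`, `m` on `m (1 - s)`, `m + (1 - m) s` give mean `m` for every `s`;
  -- the intermediate value theorem picks `s` so that the entropy is `e`
  have hcont : Continuous fun s => (1 - m) * H2 (m * (1 - s)) + m * H2 (m + (1 - m) * s) := by
    fun_prop
  have hIVT := intermediate_value_Icc' zero_le_one hcont.continuousOn
  beta_reduce at hIVT
  rw [show (1 - m) * H2 (m * (1 - 1)) + m * H2 (m + (1 - m) * 1) = 0 by simp [H2_zero, H2_one],
    show (1 - m) * H2 (m * (1 - 0)) + m * H2 (m + (1 - m) * 0) = H2 m by simp; ring] at hIVT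
  obtain ⟨s, hs, hse⟩ := hIVT ⟨he.1.le, he.2⟩
  have hs1 : s < 1 := hs.2.lt_of_ne (by rintro rfl; simp [H2_zero, H2_one] at hse; linarith [he.1])
  refine ⟨![1 - m, m], ![m * (1 - s), m + (1 - m) * s], ?_, ?_, ?_, ?_, ?_⟩
  · intro i; fin_cases i <;> simp <;> linarith [hm.1, hm.2]
  · simp
  · intro i
    fin_cases i
    · exact ⟨by simp; nlinarith [hm.1], by simp; nlinarith [hm.1, hm.2, hs.1]⟩
    · exact ⟨by simp; nlinarith [hm.1, hm.2, hs.1], by simp; nlinarith [hm.1, hm.2]⟩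
  · simp
    ring
  · simpa using hse

lemma zetaSet_nonempty {mu mw eu ew : ℝ} (hmu : mu ∈ Ioo (0 : ℝ) 1) (hmw : mw ∈ Ioo (0 : ℝ) 1)
    (heu : eu ∈ Ioc (0 : ℝ) (H2 mu)) (hew : ew ∈ Ioc (0 : ℝ) (H2 mw)) :
    (zetaSet mu mw eu ew).Nonempty := by
  obtain ⟨p, u, hp0, hp1, hu, hpu, hpHu⟩ := exists_fin_two_law hmu heu
  obtain ⟨q, w, hq0, hq1, hw, hqw, hqHw⟩ := exists_fin_two_law hmw hew
  refine ⟨_, Fin 2 × Fin 2, inferInstance, fun x => p x.1 * q x.2, fun x => u x.1, fun x => w x.2,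
    fun x => mul_nonneg (hp0 _) (hq0 _), ?_, fun x => hu _, fun x => hw _, ?_, ?_, ?_, ?_, rfl⟩ <;>
    simp only [Fintype.sum_prod_type, mul_assoc, mul_comm (q _) (u _), mul_comm (q _) (H2 (u _)),
      ← Finset.mul_sum, ← Finset.sum_mul, hp1, hq1, mul_one, one_mul, hpu, hqw, hpHu, hqHw]

lemma abs_sub_le_one_sub_two_mul_H2inv {a b : ℝ} (ha : a ∈ Icc (0 : ℝ) (1 / 2))
    (hb : b ∈ Icc (0 : ℝ) (1 / 2)) : |a - b| ≤ 1 - 2 * H2inv ((H2 a + H2 b) / 2) := by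
  have ha' : a ∈ Icc (0 : ℝ) 1 := ⟨ha.1, by linarith [ha.2]⟩
  have hb' : b ∈ Icc (0 : ℝ) 1 := ⟨hb.1, by linarith [hb.2]⟩
  have hconc : (H2 a + H2 b) / 2 ≤ H2 ((a + b) / 2) := by
    have := concaveOn_H2.2 ha' hb' (by norm_num : (0 : ℝ) ≤ 1 / 2) (by norm_num : (0 : ℝ) ≤ 1 / 2)
      (by norm_num)
    simp only [smul_eq_mul] at this
    rw [show (a + b) / 2 = 1 / 2 * a + 1 / 2 * b by ring]
    linarith
  obtain ⟨hm, hH2⟩ := H2inv_mem_and_H2_H2inv (e := (H2 a + H2 b) / 2)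
    ⟨by linarith [H2_nonneg ha', H2_nonneg hb'], by linarith [H2_le_one a, H2_le_one b]⟩
  have : H2inv ((H2 a + H2 b) / 2) ≤ (a + b) / 2 :=
    (strictMonoOn_H2.le_iff_le hm ⟨by linarith [ha.1, hb.1], by linarith [ha.2, hb.2]⟩).1
      (hH2.symm ▸ hconc)
  rw [abs_le]
  constructor <;> linarith [ha.2, hb.2]

lemma phi_abs_sub_H2inv {eu ew : ℝ} (heu : eu ∈ Ioc (0 : ℝ) 1) (hew : ew ∈ Ioc (0 : ℝ) 1) :
    phi ((1 - |H2inv eu - H2inv ew|) / 2) ((eu + ew) / 2) =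
      eta ((eu + ew) / 2) - F (eu + ew) (H2inv eu - H2inv ew) := by
  obtain ⟨ha, hHa⟩ := H2inv_mem_and_H2_H2inv (Ioc_subset_Icc_self heu)
  obtain ⟨hb, hHb⟩ := H2inv_mem_and_H2_H2inv (Ioc_subset_Icc_self hew)
  have hy : (eu + ew) / 2 ∈ Ioc (0 : ℝ) 1 :=
    ⟨by linarith [heu.1, hew.1], by linarith [heu.2, hew.2]⟩
  have hy2 : 2 * ((eu + ew) / 2) = eu + ew := by ring
  have heta := eta_eq_F hy
  rw [hy2] at heta
  have hle := abs_sub_le_one_sub_two_mul_H2inv ha hb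
  rw [hHa, hHb] at hle
  have := F_le_F (s := eu + ew) (by linarith [heu.1, hew.1])
    (hle.trans_eq (abs_of_nonneg (hle.trans' (abs_nonneg _))).symm)
  rw [phi_eq_max ⟨abs_nonneg _, by rw [abs_lt]; constructor <;> linarith [ha.1, ha.2, hb.1, hb.2]⟩
    hy, hy2, F_abs, max_eq_right (by linarith)]

lemma eta_sub_F_le_phi {m m' y : ℝ} (hm : m ∈ Ioo (0 : ℝ) 1) (hm' : m' ∈ Ioo (0 : ℝ) 1)
    (hy : y ∈ Ioc (0 : ℝ) 1) : eta y - F (2 * y) (m - m') ≤ phi ((1 - |m - m'|) / 2) y := by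
  rw [phi_eq_max ⟨abs_nonneg _, by rw [abs_lt]; constructor <;> linarith [hm.1, hm.2, hm'.1, hm'.2]⟩
    hy, F_abs]
  exact le_max_right _ _

lemma ConvexOn.map_sum_mul_le {ι : Type*} [Fintype ι] {s : Set (ℝ × ℝ)} {f : ℝ × ℝ → ℝ}
    (hf : ConvexOn ℝ s f) {p a b : ι → ℝ} (hp₀ : ∀ i, 0 ≤ p i) (hp₁ : ∑ i, p i = 1)
    (hmem : ∀ i, (a i, b i) ∈ s) :
    f (∑ i, p i * a i, ∑ i, p i * b i) ≤ ∑ i, p i * f (a i, b i) := by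
  have := hf.map_sum_le (t := Finset.univ) (fun i _ => hp₀ i) hp₁ fun i _ => hmem i
  have hsum : ∑ i, p i • (a i, b i) = (∑ i, p i * a i, ∑ i, p i * b i) := by
    ext <;> simp [Prod.fst_sum, Prod.snd_sum]
  simpa only [hsum, smul_eq_mul] using this

lemma kappa_H2inv_add_F_le_of_mem_zetaSet
    (hyp1 : ∀ u w : ℝ, u ∈ Ioc (0 : ℝ) (1 / 2) → w ∈ Ioc (0 : ℝ) (1 / 2) →
      kappa u w ≤ kappa (1 - u) w)
    (hyp2 : ConvexOn ℝ (Ioc (0 : ℝ) 1 ×ˢ Ioc (0 : ℝ) 1)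
      (fun q : ℝ × ℝ => kappa (H2inv q.1) (H2inv q.2)))
    {mu mw eu ew c : ℝ} (hc : c ∈ zetaSet mu mw eu ew) :
    kappa (H2inv eu) (H2inv ew) + F (eu + ew) (mu - mw) ≤ c := by
  obtain ⟨X, _, p, u, w, hp₀, hp₁, hu, hw, hmu, hmw, heu, hew, rfl⟩ := hc
  have hkappa : kappa (H2inv eu) (H2inv ew) ≤ ∑ x, p x * kappa (u x) (w x) := by
    have := hyp2.map_sum_mul_le hp₀ hp₁ (a := fun x => H2 (u x)) (b := fun x => H2 (w x))
      fun x => ⟨⟨H2_pos (hu x), H2_le_one _⟩, ⟨H2_pos (hw x), H2_le_one _⟩⟩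
    rw [heu, hew] at this
    exact this.trans (Finset.sum_le_sum fun x _ =>
      mul_le_mul_of_nonneg_left (kappa_H2inv_H2_le hyp1 (hu x) (hw x)) (hp₀ x))
  have hF : F (eu + ew) (mu - mw) ≤ ∑ x, p x * F (H2 (u x) + H2 (w x)) (u x - w x) := by
    have := convexOn_F.map_sum_mul_le hp₀ hp₁ (a := fun x => H2 (u x) + H2 (w x))
      (b := fun x => u x - w x) fun x => ⟨add_pos (H2_pos (hu x)) (H2_pos (hw x)), trivial⟩
    simpa only [mul_add, mul_sub, Finset.sum_add_distrib, Finset.sum_sub_distrib, heu, hew, hmu,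
      hmw] using this
  have hsplit : 1 / 2 * ∑ x, p x * ((u x - w x) * (J (w x) - J (u x))) =
      ∑ x, p x * kappa (u x) (w x) + ∑ x, p x * F (H2 (u x) + H2 (w x)) (u x - w x) := by
    rw [Finset.mul_sum, ← Finset.sum_add_distrib]
    refine Finset.sum_congr rfl fun x _ => ?_
    rw [kappa_eq_sub_F]
    ring
  linarith

theorem stmt19
    (hyp1 : ∀ u w : ℝ, u ∈ Set.Ioc (0 : ℝ) (1 / 2) → w ∈ Set.Ioc (0 : ℝ) (1 / 2) →
      kappa u w ≤ kappa (1 - u) w)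
    (hyp2 : ConvexOn ℝ (Set.Ioc (0 : ℝ) 1 ×ˢ Set.Ioc (0 : ℝ) 1)
      (fun q : ℝ × ℝ => kappa (H2inv q.1) (H2inv q.2)))
    (mu mw eu ew : ℝ) (hmu : mu ∈ Set.Ioo (0 : ℝ) 1) (hmw : mw ∈ Set.Ioo (0 : ℝ) 1)
    (heu : eu ∈ Set.Ioc (0 : ℝ) (H2 mu)) (hew : ew ∈ Set.Ioc (0 : ℝ) (H2 mw)) :
    zeta mu mw eu ew ≥
      phi ((1 - |H2inv eu - H2inv ew|) / 2) ((eu + ew) / 2) +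
        (H2inv eu - H2inv ew) * (J (H2inv ew) - J (H2inv eu)) / 2 -
        phi ((1 - |mu - mw|) / 2) ((eu + ew) / 2) := by
  have heu' : eu ∈ Ioc (0 : ℝ) 1 := ⟨heu.1, heu.2.trans (H2_le_one mu)⟩
  have hew' : ew ∈ Ioc (0 : ℝ) 1 := ⟨hew.1, hew.2.trans (H2_le_one mw)⟩
  have hphi_m := eta_sub_F_le_phi hmu hmw (y := (eu + ew) / 2)
    ⟨by linarith [heu'.1, hew'.1], by linarith [heu'.2, hew'.2]⟩
  rw [show 2 * ((eu + ew) / 2) = eu + ew by ring] at hphi_m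
  have hkappa := kappa_eq_sub_F (H2inv eu) (H2inv ew)
  rw [(H2inv_mem_and_H2_H2inv (Ioc_subset_Icc_self heu')).2,
    (H2inv_mem_and_H2_H2inv (Ioc_subset_Icc_self hew')).2] at hkappa
  rw [phi_abs_sub_H2inv heu' hew']
  refine le_csInf (zetaSet_nonempty hmu hmw heu hew) fun c hc => ?_
  linarith [kappa_H2inv_add_F_le_of_mem_zetaSet hyp1 hyp2 hc]
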